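/- Conversely, if there exist k s-t paths in a finite DAG G (with every vertex on some s-t path) that collectively visit every vertex, and k ≤ |V| - 2, then the split network admits a feasible integer flow of value k. -/

import Mathlib

/-!
Send one unit of flow along the split image `s⁺ s⁺⁺ … t⁺ t⁺⁺` of each path. Since every vertex
lies on some path, every split edge `(v⁺, v⁺⁺)` carries at least one unit. Since `G` is acyclic the
paths are simple, so no edge carries more than `k ≤ |V| - 2` units and each walk leaves `s⁺`
exactly once. A walk enters and leaves each of its inner nodes equally often, so the sum of the
walk flows is conserved away from `s⁺` and `t⁺⁺`.
-/

def IsWalk {V : Type*} (E : V → V → Prop) (l : List V) : Prop :=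
  l ≠ [] ∧ l.Chain' E

def IsSTWalk {V : Type*} (E : V → V → Prop) (s t : V) (l : List V) : Prop :=
  IsWalk E l ∧ l.head? = some s ∧ l.getLast? = some t

/-- Edges of the vertex-split network: each vertex `v` is split into the entry
vertex `Sum.inl v` (i.e. `v⁺`) and the exit vertex `Sum.inr v` (i.e. `v⁺⁺`),
joined by the split edge `(v⁺, v⁺⁺)`; each original edge `(u,v)` becomes
`(u⁺⁺, v⁺)`. -/
def SplitEdge {V : Type*} (E : V → V → Prop) : V ⊕ V → V ⊕ V → Prop :=
  fun a b =>
    match a, b with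
    | Sum.inl v, Sum.inr w => v = w
    | Sum.inr u, Sum.inl v => E u v
    | _, _ => False

def SplitLB {V : Type*} [DecidableEq V] (s t : V) : V ⊕ V → V ⊕ V → ℕ :=
  fun a b =>
    match a, b with
    | Sum.inl v, Sum.inr w => if v = w ∧ v ≠ s ∧ v ≠ t then 1 else 0
    | _, _ => 0

def FeasibleSplitFlow {V : Type*} [Fintype V] [DecidableEq V]
    (E : V → V → Prop) (s t : V) (f : V ⊕ V → V ⊕ V → ℕ) : Prop :=
  (∀ a b, ¬ SplitEdge E a b → f a b = 0) ∧
  (∀ a b, SplitLB s t a b ≤ f a b) ∧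
  (∀ a b, SplitEdge E a b → f a b ≤ Fintype.card V - 2) ∧
  (∀ w, w ≠ Sum.inl s → w ≠ Sum.inr t → (∑ a, f a w) = ∑ b, f w b)

def SplitFlowValue {V : Type*} [Fintype V] (s : V) (f : V ⊕ V → V ⊕ V → ℕ) : ℕ :=
  ∑ b, f (Sum.inl s) b

namespace List

variable {α β : Type*}

theorem consecutivePairs_cons_cons (a b : α) (l : List α) :
    (a :: b :: l).consecutivePairs = (a, b) :: (b :: l).consecutivePairs := rfl

theorem consecutivePairs_subset_cons (a : α) : ∀ l : List α,
    l.consecutivePairs ⊆ (a :: l).consecutivePairs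
  | [] => nil_subset _
  | _ :: _ => subset_cons_self _ _

theorem IsChain.rel_of_mem_consecutivePairs {R : α → α → Prop} :
    ∀ {l : List α}, l.IsChain R → ∀ {a b : α}, (a, b) ∈ l.consecutivePairs → R a b
  | [], _, _, _, h | [_], _, _, _, h => by cases h
  | a :: b :: l, hl, x, y, hxy => by
    rw [isChain_cons_cons] at hl
    rw [consecutivePairs_cons_cons, mem_cons, Prod.mk.injEq] at hxy
    rcases hxy with ⟨rfl, rfl⟩ | hxy
    · exact hl.1
    · exact hl.2.rel_of_mem_consecutivePairs hxy

theorem map_fst_consecutivePairs : ∀ l : List α, l.consecutivePairs.map Prod.fst = l.dropLast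
  | [] | [_] => rfl
  | a :: b :: l => by
    rw [consecutivePairs_cons_cons, map_cons, map_fst_consecutivePairs (b :: l)]
    rfl

theorem map_snd_consecutivePairs (l : List α) : l.consecutivePairs.map Prod.snd = l.tail :=
  map_snd_zip (by simp)

theorem Nodup.consecutivePairs {l : List α} (h : l.Nodup) : l.consecutivePairs.Nodup :=
  Nodup.of_map Prod.fst <| by
    rw [map_fst_consecutivePairs]
    exact h.sublist (dropLast_sublist l)

theorem IsChain.nodup_of_irrefl_transGen {R : α → α → Prop}
    (hR : ∀ a, ¬ Relation.TransGen R a a) {l : List α} (h : l.IsChain R) : l.Nodup := by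
  have : IsTrans α (Relation.TransGen R) := ⟨fun _ _ _ => Relation.TransGen.trans⟩
  have hpw : l.Pairwise (Relation.TransGen R) :=
    isChain_iff_pairwise.mp (h.imp fun _ _ => Relation.TransGen.single)
  exact hpw.imp fun {a _} hab => by rintro rfl; exact hR a hab

variable [DecidableEq α] [DecidableEq β]

theorem count_tail_of_head?_ne {l : List α} {a : α} (h : l.head? ≠ some a) :
    l.tail.count a = l.count a := by
  simp [count_tail, h]

theorem count_dropLast_of_getLast?_ne {l : List α} {a : α} (h : l.getLast? ≠ some a) :
    l.dropLast.count a = l.count a := by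
  rw [← count_reverse, ← tail_reverse, count_tail_of_head?_ne (by rwa [head?_reverse]),
    count_reverse]

theorem sum_count_mk_left [Fintype α] (P : List (α × β)) (b : β) :
    ∑ a, P.count (a, b) = (P.map Prod.snd).count b := by
  induction P with
  | nil => simp
  | cons e P ih =>
    obtain ⟨x, y⟩ := e
    by_cases hy : y = b <;> simp [count_cons, Finset.sum_add_distrib, ih, hy]

theorem sum_count_mk_right [Fintype β] (P : List (α × β)) (a : α) :
    ∑ b, P.count (a, b) = (P.map Prod.fst).count a := by
  induction P with
  | nil => simp
  | cons e P ih =>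
    obtain ⟨x, y⟩ := e
    by_cases hx : x = a <;> simp [count_cons, Finset.sum_add_distrib, ih, hx]

end List

section WalkFlow

variable {α ι : Type*} [DecidableEq α] [Fintype ι]

def walkFlow (W : ι → List α) (a b : α) : ℕ :=
  ∑ i, (W i).consecutivePairs.count (a, b)

variable {W : ι → List α}

theorem walkFlow_eq_zero_of_not_rel {R : α → α → Prop} (hW : ∀ i, (W i).IsChain R) {a b : α}
    (hab : ¬ R a b) : walkFlow W a b = 0 :=
  Finset.sum_eq_zero fun i _ => List.count_eq_zero.mpr fun h =>
    hab ((hW i).rel_of_mem_consecutivePairs h)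

theorem walkFlow_le_card (hW : ∀ i, (W i).Nodup) (a b : α) : walkFlow W a b ≤ Fintype.card ι :=
  calc walkFlow W a b ≤ ∑ _i : ι, 1 :=
        Finset.sum_le_sum fun i _ => List.nodup_iff_count_le_one.mp (hW i).consecutivePairs _
    _ = Fintype.card ι := by simp

theorem one_le_walkFlow {a b : α} {i : ι} (h : (a, b) ∈ (W i).consecutivePairs) :
    1 ≤ walkFlow W a b :=
  (List.count_pos_iff.mpr h).trans_le
    (Finset.single_le_sum (f := fun j => (W j).consecutivePairs.count (a, b))
      (fun _ _ => Nat.zero_le _) (Finset.mem_univ i))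

theorem sum_walkFlow_left [Fintype α] (W : ι → List α) (b : α) :
    ∑ a, walkFlow W a b = ∑ i, (W i).tail.count b := by
  simp only [walkFlow]
  rw [Finset.sum_comm]
  simp only [List.sum_count_mk_left, List.map_snd_consecutivePairs]

theorem sum_walkFlow_right [Fintype α] (W : ι → List α) (a : α) :
    ∑ b, walkFlow W a b = ∑ i, (W i).dropLast.count a := by
  simp only [walkFlow]
  rw [Finset.sum_comm]
  simp only [List.sum_count_mk_right, List.map_fst_consecutivePairs]

variable {R : α → α → Prop} {x y : α}

theorem walkFlow_conservation [Fintype α] (hW : ∀ i, IsSTWalk R x y (W i)) {w : α} (hx : w ≠ x)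
    (hy : w ≠ y) : ∑ a, walkFlow W a w = ∑ b, walkFlow W w b := by
  rw [sum_walkFlow_left, sum_walkFlow_right]
  refine Finset.sum_congr rfl fun i _ => ?_
  rw [List.count_tail_of_head?_ne (by rw [(hW i).2.1]; simpa using hx.symm),
    List.count_dropLast_of_getLast?_ne (by rw [(hW i).2.2]; simpa using hy.symm)]

theorem sum_walkFlow_source [Fintype α] (hW : ∀ i, IsSTWalk R x y (W i)) (hnd : ∀ i, (W i).Nodup)
    (hxy : x ≠ y) : ∑ b, walkFlow W x b = Fintype.card ι := by
  rw [sum_walkFlow_right]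
  have hone : ∀ i, (W i).dropLast.count x = 1 := fun i => by
    rw [List.count_dropLast_of_getLast?_ne (by rw [(hW i).2.2]; simpa using hxy.symm)]
    exact List.count_eq_one_of_mem (hnd i) (List.mem_of_mem_head? (hW i).2.1)
  simp [hone]

end WalkFlow

section SplitWalk

variable {V : Type*}

def splitWalk (l : List V) : List (V ⊕ V) :=
  l.flatMap fun v => [Sum.inl v, Sum.inr v]

theorem splitWalk_cons (v : V) (l : List V) :
    splitWalk (v :: l) = Sum.inl v :: Sum.inr v :: splitWalk l := rfl

theorem isChain_splitWalk {E : V → V → Prop} :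
    ∀ {l : List V}, l.IsChain E → (splitWalk l).IsChain (SplitEdge E)
  | [], _ => .nil
  | [_], _ => .cons_cons rfl (.singleton _)
  | a :: b :: l, h => by
    rw [List.isChain_cons_cons] at h
    rw [splitWalk_cons, splitWalk_cons]
    exact .cons_cons rfl (.cons_cons h.1 (isChain_splitWalk h.2))

theorem nodup_splitWalk {l : List V} (h : l.Nodup) : (splitWalk l).Nodup :=
  List.nodup_flatMap.mpr ⟨fun v _ => by simp, h.imp fun hne => by simp [Function.onFun, hne.symm]⟩

theorem head?_splitWalk (l : List V) : (splitWalk l).head? = l.head?.map Sum.inl := by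
  cases l <;> rfl

theorem getLast?_splitWalk : ∀ l : List V, (splitWalk l).getLast? = l.getLast?.map Sum.inr
  | [] | [_] => rfl
  | a :: b :: l => by
    rw [splitWalk_cons, List.getLast?_cons_cons, splitWalk_cons, List.getLast?_cons_cons,
      ← splitWalk_cons, getLast?_splitWalk (b :: l), List.getLast?_cons_cons]

theorem isSTWalk_splitWalk {E : V → V → Prop} {s t : V} {l : List V} (h : IsSTWalk E s t l) :
    IsSTWalk (SplitEdge E) (Sum.inl s) (Sum.inr t) (splitWalk l) := by
  obtain ⟨⟨-, hchain⟩, hs, ht⟩ := h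
  have hhead : (splitWalk l).head? = some (Sum.inl s) := by rw [head?_splitWalk, hs]; rfl
  refine ⟨⟨fun hnil => by simp [hnil] at hhead, isChain_splitWalk hchain⟩, hhead, ?_⟩
  rw [getLast?_splitWalk, ht]; rfl

theorem mem_consecutivePairs_splitWalk {v : V} :
    ∀ {l : List V}, v ∈ l → (Sum.inl v, Sum.inr v) ∈ (splitWalk l).consecutivePairs
  | a :: l, hv => by
    rw [splitWalk_cons, List.consecutivePairs_cons_cons, List.mem_cons]
    rcases List.mem_cons.mp hv with rfl | hv
    · exact .inl rfl
    · exact .inr (List.consecutivePairs_subset_cons _ _ (mem_consecutivePairs_splitWalk hv))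

theorem splitLB_le [DecidableEq V] {s t : V} {f : V ⊕ V → V ⊕ V → ℕ}
    (hf : ∀ v, v ≠ s → v ≠ t → 1 ≤ f (Sum.inl v) (Sum.inr v)) :
    ∀ a b, SplitLB s t a b ≤ f a b
  | Sum.inl v, Sum.inr w => by
    show (if v = w ∧ v ≠ s ∧ v ≠ t then 1 else 0) ≤ _
    split_ifs with h
    · obtain ⟨rfl, hs, ht⟩ := h
      exact hf v hs ht
    · exact Nat.zero_le _
  | Sum.inl _, Sum.inl _ | Sum.inr _, Sum.inl _ | Sum.inr _, Sum.inr _ => Nat.zero_le _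

end SplitWalk

theorem covering_paths_give_feasible_flow_general {V : Type*} [Fintype V] [DecidableEq V]
    (E : V → V → Prop) (s t : V)
    (hacyc : ∀ v, ¬ Relation.TransGen E v v)
    (k : ℕ) (hk : k ≤ Fintype.card V - 2)
    (p : Fin k → List V)
    (hpaths : ∀ i, IsSTWalk E s t (p i))
    (hcover : ∀ v : V, ∃ i, v ∈ p i) :
    ∃ f : V ⊕ V → V ⊕ V → ℕ,
      FeasibleSplitFlow E s t f ∧ SplitFlowValue s f = k := by
  set W : Fin k → List (V ⊕ V) := fun i => splitWalk (p i)
  have hW : ∀ i, IsSTWalk (SplitEdge E) (Sum.inl s) (Sum.inr t) (W i) :=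
    fun i => isSTWalk_splitWalk (hpaths i)
  have hnd : ∀ i, (W i).Nodup :=
    fun i => nodup_splitWalk ((hpaths i).1.2.nodup_of_irrefl_transGen hacyc)
  have hcap : Fintype.card (Fin k) ≤ Fintype.card V - 2 := by rwa [Fintype.card_fin]
  refine ⟨walkFlow W, ⟨?_, ?_, ?_, ?_⟩, ?_⟩
  · exact fun a b => walkFlow_eq_zero_of_not_rel fun i => (hW i).1.2
  · refine splitLB_le fun v _ _ => ?_
    obtain ⟨i, hi⟩ := hcover v
    exact one_le_walkFlow (mem_consecutivePairs_splitWalk hi)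
  · exact fun a b _ => (walkFlow_le_card hnd a b).trans hcap
  · exact fun w hs ht => walkFlow_conservation hW hs ht
  · exact (sum_walkFlow_source hW hnd Sum.inl_ne_inr).trans (Fintype.card_fin k)

/-- Conversely, if a finite DAG (source `s`, sink `t`, `|V| ≥ 3`,
every vertex on some s-t path) has `k` s-t paths collectively visiting every
vertex, with `k ≤ |V| - 2`, then the vertex-split network admits a feasible
integer flow of value `k`. -/
theorem covering_paths_give_feasible_flow {V : Type*} [Fintype V] [DecidableEq V]
    (E : V → V → Prop) (s t : V) (hst : s ≠ t)
    (hcard : 3 ≤ Fintype.card V)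
    (hacyc : ∀ v, ¬ Relation.TransGen E v v)
    (hs : ∀ u, ¬ E u s) (ht : ∀ u, ¬ E t u)
    (hall : ∀ v : V, ∃ p : List V, IsSTWalk E s t p ∧ v ∈ p)
    (k : ℕ) (hk : k ≤ Fintype.card V - 2)
    (p : Fin k → List V)
    (hpaths : ∀ i, IsSTWalk E s t (p i))
    (hcover : ∀ v : V, ∃ i, v ∈ p i) :
    ∃ f : V ⊕ V → V ⊕ V → ℕ,
      FeasibleSplitFlow E s t f ∧ SplitFlowValue s f = k :=
  covering_paths_give_feasible_flow_general E s t hacyc k hk p hpaths hcover
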